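/- The map ε on the triple-graded module K_z defined on basis elements by ε[a, y, w] = (−1)^{∑_{x' < x} v_x(y) v_{x'}(w)} [a, y, w] is an involutive G_z-equivariant bigraded automorphism satisfying ε d̃ ε = d and ε δ̃ ε = δ, where (d, δ) and (d̃, δ̃) are the two pairs of commuting differentials defined by d[a,y,w] = ∑_{x|y} ω(x,y)(p(x;Fr_x^{-1})[a,y/x,w] − N_{z(x)}[z(x)a,y/x,w]), δ[a,y,w] = (−1)^{deg y} ∑_x (−1)^{∑_{x'<x} v_{x'}(w)} a_{z(x)}[a,y,wx], and the twisted versions d̃, δ̃ with the sign conventions d̃[a,y,w] = ∑_{x|y} ω(x,y)(−1)^{∑_{x'<x}v_{x'}(w)}(p(x;Fr_x^{-1})[a,y/x,w] − N_{z(x)}[az(x),y/x,w]) and δ̃[a,y,w] = ∑_x (−1)^{∑_{x'≤x}v_{x'}(y)}(−1)^{∑_{x'<x}v_{x'}(w)} a_{z(x)}[a,y,wx]. Consequently the cohomologies of (K_z; d, δ) and (K_z; d̃, δ̃) are isomorphic. -/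

import Mathlib

/-! Universal norm distribution scaffold.  The finite element `z` has prime set `ι`
(totally ordered), multiplicities recorded only through the finite abelian groups
`G x = G_{z(x)}`; `G_z = ∏_{x|z} G_{z(x)}`.  A basis symbol `[g z']` of `𝒜_z` is a pair
of a stalk (a subset `S ⊆ ι`) and a group element `g ∈ G_{z'} = ∏_{x∈S} G x`, encoded
as a function on all of `ι` which is trivial outside `S`. -/

/-- Basis symbols `[g z']` of `𝒜_z`. -/
def UndIdx (ι : Type) (G : ι → Type) [∀ i, CommGroup (G i)] : Type :=
  {q : Finset ι × (∀ i, G i) // ∀ i ∉ q.1, q.2 i = 1}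

section
variable (ι : Type) [Fintype ι] [LinearOrder ι]
  (G : ι → Type) [∀ i, CommGroup (G i)] [∀ i, Fintype (G i)]

/-- Action of `σ ∈ G_z` on a symbol `[g z']`: multiply the components in the stalk. -/
def undAct (σ : ∀ i, G i) (q : UndIdx ι G) : UndIdx ι G :=
  ⟨(q.1.1, fun i => if i ∈ q.1.1 then σ i * q.1.2 i else 1), fun _ hi => if_neg hi⟩

/-- The symbol `[g h z(x) z']` obtained from `[g z']` by extending the stalk by `z(x)`
with component `h ∈ G_{z(x)}`. -/
def undExt (x : ι) (h : G x) (q : UndIdx ι G) : UndIdx ι G :=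
  ⟨(insert x q.1.1, Function.update q.1.2 x h), by
    intro i hi
    have hix : i ≠ x := fun e => hi (e ▸ Finset.mem_insert_self x q.1.1)
    show Function.update q.1.2 x h i = 1
    rw [Function.update_of_ne hix]
    exact q.2 i fun hm => hi (Finset.mem_insert_of_mem hm)⟩

variable (𝒯 : Type) [CommRing 𝒯] (p : ι → Polynomial 𝒯) (fr : ι → ∀ i, G i)

/-- The distribution relation `λ_{z(x)}([g z']) = p(x; Fr_x^{-1})[g z'] − N_{z(x)}[g z(x) z']`
(for `x` not dividing the stalk `z'`), as an element of the free module `𝒜_z`. -/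
noncomputable def undLam (x : ι) (q : UndIdx ι G) : UndIdx ι G →₀ 𝒯 :=
  (∑ k ∈ (p x).support,
      Finsupp.single (undAct ι G (fun i => (fr x i)⁻¹ ^ k) q) ((p x).coeff k))
    - ∑ h : G x, Finsupp.single (undExt ι G x h q) 1

/-- The `𝒯[G_z]`-submodule `𝒟_z` of distribution relations: the `𝒯`-span of all
`G_z`-translates of the `λ_{z(x)}([g z'])`, `x ∤ z'`. -/
noncomputable def undRel : Submodule 𝒯 (UndIdx ι G →₀ 𝒯) :=
  Submodule.span 𝒯
    {v | ∃ (σ : ∀ i, G i) (x : ι) (q : UndIdx ι G), x ∉ q.1.1 ∧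
      v = Finsupp.mapDomain (undAct ι G σ) (undLam ι G 𝒯 p fr x q)}

/-- The universal norm distribution `𝒰_z = 𝒜_z/𝒟_z`. -/
noncomputable abbrev UND : Type := (UndIdx ι G →₀ 𝒯) ⧸ undRel ι G 𝒯 p fr

end

section
variable (ι : Type) [Fintype ι] [LinearOrder ι]
  (G : ι → Type) [∀ i, CommGroup (G i)] [∀ i, Fintype (G i)]
  (𝒯 : Type) [CommRing 𝒯] (p : ι → Polynomial 𝒯) (fr : ι → ∀ i, G i)
  (gen : ∀ i, G i)

/-- Basis symbols `[a, y, w]` of `K_z = Hom_{G_z}(P_{z•}, ℒ_z^•)`: `y | z̄` squarefree,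
`a ∈ A_{z/z(y)}` (stalk disjoint from `y`), and `w` a monomial in the primes (exponent
vector `ι → ℕ`). -/
def KIdx : Type :=
  {t : Finset ι × UndIdx ι G × (ι → ℕ) // Disjoint t.1 t.2.1.1.1}

/-- `∑_{x' < x} v_{x'}(w)`. -/
def wsumlt (x : ι) (w : ι → ℕ) : ℕ := ∑ x' ∈ Finset.univ.filter (fun x' => x' < x), w x'

/-- The summand `a_{z(x)}[a, y, w·x]` of the differential `δ`: with `a_{z(x)} = 1 − σ_{z(x)}`
if `v_x(w)` is even and `a_{z(x)} = N_{z(x)}` if `v_x(w)` is odd. -/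
noncomputable def kAz (x : ι) (t : KIdx ι G) : KIdx ι G →₀ 𝒯 :=
  if Even (t.1.2.2 x) then
    Finsupp.single
        (⟨(t.1.1, t.1.2.1, Function.update t.1.2.2 x (t.1.2.2 x + 1)), t.2⟩ : KIdx ι G) 1
      - Finsupp.single
        (⟨(t.1.1, undAct ι G (Pi.mulSingle x (gen x)) t.1.2.1,
            Function.update t.1.2.2 x (t.1.2.2 x + 1)), t.2⟩ : KIdx ι G) 1
  else
    ∑ h : G x,
      Finsupp.single
        (⟨(t.1.1, undAct ι G (Pi.mulSingle x h) t.1.2.1,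
            Function.update t.1.2.2 x (t.1.2.2 x + 1)), t.2⟩ : KIdx ι G) 1

/-- `δ[a,y,w] = (−1)^{deg y} ∑_x (−1)^{∑_{x'<x} v_{x'}(w)} a_{z(x)} [a, y, wx]`. -/
noncomputable def kDelta : (KIdx ι G →₀ 𝒯) →ₗ[𝒯] (KIdx ι G →₀ 𝒯) :=
  Finsupp.lsum 𝒯 fun t => LinearMap.toSpanSingleton 𝒯 _
    (((-1 : ℤ) ^ t.1.1.card) •
      ∑ x : ι, ((-1 : ℤ) ^ wsumlt ι x t.1.2.2) • kAz ι G 𝒯 gen x t)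

/-- `δ̃[a,y,w] = ∑_x (−1)^{∑_{x'≤x} v_{x'}(y)} (−1)^{∑_{x'<x} v_{x'}(w)} a_{z(x)} [a, y, wx]`. -/
noncomputable def kDeltaT : (KIdx ι G →₀ 𝒯) →ₗ[𝒯] (KIdx ι G →₀ 𝒯) :=
  Finsupp.lsum 𝒯 fun t => LinearMap.toSpanSingleton 𝒯 _
    (∑ x : ι,
      (((-1 : ℤ) ^ ((t.1.1.filter (fun x' => x' ≤ x)).card)) *
          ((-1 : ℤ) ^ wsumlt ι x t.1.2.2)) • kAz ι G 𝒯 gen x t)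

/-- `d[a,y,w] = ∑_{x∣y} ω(x,y) (p(x;Fr_x^{-1})[a,y/x,w] − N_{z(x)}[z(x)a,y/x,w])`. -/
noncomputable def kD : (KIdx ι G →₀ 𝒯) →ₗ[𝒯] (KIdx ι G →₀ 𝒯) :=
  Finsupp.lsum 𝒯 fun t => LinearMap.toSpanSingleton 𝒯 _
    (∑ x ∈ t.1.1.attach,
      ((-1 : ℤ) ^ ((t.1.1.filter (fun x' => x' < x.1)).card)) •
        ((∑ k ∈ (p x.1).support,
            Finsupp.single
              (⟨(t.1.1.erase x.1,
                  undAct ι G (fun i => (fr x.1 i)⁻¹ ^ k) t.1.2.1, t.1.2.2), by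
                exact t.2.mono_left (Finset.erase_subset _ _)⟩ : KIdx ι G)
              ((p x.1).coeff k))
          - ∑ h : G x.1,
              Finsupp.single
                (⟨(t.1.1.erase x.1, undExt ι G x.1 h t.1.2.1, t.1.2.2), by
                  show Disjoint (t.1.1.erase x.1) (insert x.1 t.1.2.1.1.1)
                  rw [Finset.disjoint_insert_right]
                  exact ⟨Finset.notMem_erase _ _,
                    t.2.mono_left (Finset.erase_subset _ _)⟩⟩ : KIdx ι G)
                (1 : 𝒯)))

/-- `d̃[a,y,w] = ∑_{x∣y} ω(x,y) (−1)^{∑_{x'<x} v_{x'}(w)}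
    (p(x;Fr_x^{-1})[a,y/x,w] − N_{z(x)}[z(x)a,y/x,w])`. -/
noncomputable def kDT : (KIdx ι G →₀ 𝒯) →ₗ[𝒯] (KIdx ι G →₀ 𝒯) :=
  Finsupp.lsum 𝒯 fun t => LinearMap.toSpanSingleton 𝒯 _
    (∑ x ∈ t.1.1.attach,
      (((-1 : ℤ) ^ ((t.1.1.filter (fun x' => x' < x.1)).card)) *
          ((-1 : ℤ) ^ wsumlt ι x.1 t.1.2.2)) •
        ((∑ k ∈ (p x.1).support,
            Finsupp.single
              (⟨(t.1.1.erase x.1,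
                  undAct ι G (fun i => (fr x.1 i)⁻¹ ^ k) t.1.2.1, t.1.2.2), by
                exact t.2.mono_left (Finset.erase_subset _ _)⟩ : KIdx ι G)
              ((p x.1).coeff k))
          - ∑ h : G x.1,
              Finsupp.single
                (⟨(t.1.1.erase x.1, undExt ι G x.1 h t.1.2.1, t.1.2.2), by
                  show Disjoint (t.1.1.erase x.1) (insert x.1 t.1.2.1.1.1)
                  rw [Finset.disjoint_insert_right]
                  exact ⟨Finset.notMem_erase _ _,
                    t.2.mono_left (Finset.erase_subset _ _)⟩⟩ : KIdx ι G)
                (1 : 𝒯)))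

/-- `ε[a,y,w] = (−1)^{∑_{x' < x} v_x(y) v_{x'}(w)} [a,y,w]`. -/
noncomputable def kEps : (KIdx ι G →₀ 𝒯) →ₗ[𝒯] (KIdx ι G →₀ 𝒯) :=
  Finsupp.lsum 𝒯 fun t => LinearMap.toSpanSingleton 𝒯 _
    (((-1 : ℤ) ^ (∑ x ∈ t.1.1, wsumlt ι x t.1.2.2)) • Finsupp.single t (1 : 𝒯))

/-- The `G_z`-action on `K_z`. -/
noncomputable def kAct (σ : ∀ i, G i) : (KIdx ι G →₀ 𝒯) →ₗ[𝒯] (KIdx ι G →₀ 𝒯) :=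
  Finsupp.lmapDomain 𝒯 𝒯
    (fun t => (⟨(t.1.1, undAct ι G σ t.1.2.1, t.1.2.2), t.2⟩ : KIdx ι G))

end

/-- The total cohomology `ker D/im D` of an endomorphism `D`, realized as the image of
`ker D` in `coker D` (applied below to the total differentials `d + δ` and `d̃ + δ̃` of
the two double-complex structures on `K_z`). -/
abbrev kCoh {ι : Type} [Fintype ι] [LinearOrder ι]
    {G : ι → Type} [∀ i, CommGroup (G i)] [∀ i, Fintype (G i)]
    {𝒯 : Type} [CommRing 𝒯] (f : (KIdx ι G →₀ 𝒯) →ₗ[𝒯] (KIdx ι G →₀ 𝒯)) : Type :=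
  ↥(Submodule.map (LinearMap.range f).mkQ (LinearMap.ker f))


/-!
`ε` is diagonal in the basis `[a, y, w]`: it multiplies `[a, y, w]` by `epsSign y w`. Since signs
square to one, `ε` is an involution, and it commutes with `G_z`, which moves only `a`.
Every summand of `d[a, y, w]` has bidegree `(y/x, w)` and every summand of `δ[a, y, w]` has
bidegree `(y, wx)`, so `ε` acts on each summand by a single sign and both conjugation identities
reduce to sign bookkeeping:
`epsSign y w = (-1)^{∑_{x'<x} v_{x'}(w)} epsSign (y/x) w` for `x ∣ y`, and
`epsSign y (wx) = epsSign y w · (-1)^{#{x' ∣ y : x < x'}}` together with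
`#{x' ∣ y : x' ≤ x} + #{x' ∣ y : x < x'} = deg y`.
Finally `ε` intertwines the total differentials `d + δ` and `d̃ + δ̃`, hence identifies their
cohomologies.
-/

open Finset

lemma LinearMap.comp_comp_eq_of_involutive {R M : Type*} [Semiring R] [AddCommMonoid M]
    [Module R M] {ε f g : M →ₗ[R] M} (hε : ε ∘ₗ ε = LinearMap.id) (h : g ∘ₗ ε = ε ∘ₗ f) :
    ε ∘ₗ g ∘ₗ ε = f := by
  rw [h, ← LinearMap.comp_assoc, hε, LinearMap.id_comp]

noncomputable def LinearEquiv.kerModRangeCongr {R M N : Type*} [Ring R] [AddCommGroup M]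
    [Module R M] [AddCommGroup N] [Module R N] {f : M →ₗ[R] M} {g : N →ₗ[R] N} (e : M ≃ₗ[R] N)
    (h : g ∘ₗ e = e ∘ₗ f) :
    Submodule.map (LinearMap.range f).mkQ (LinearMap.ker f) ≃ₗ[R]
      Submodule.map (LinearMap.range g).mkQ (LinearMap.ker g) :=
  have hg : g = e ∘ₗ f ∘ₗ e.symm := by
    rw [← LinearMap.comp_assoc, ← h, LinearMap.comp_assoc, LinearEquiv.comp_coe,
      LinearEquiv.symm_trans_self, LinearEquiv.refl_toLinearMap, LinearMap.comp_id]
  have hker : LinearMap.ker g = (LinearMap.ker f).map (e : M →ₗ[R] N) := by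
    rw [hg, LinearEquiv.ker_comp, LinearMap.ker_comp, Submodule.map_equiv_eq_comap_symm]
  have hrange : (LinearMap.range f).map (e : M →ₗ[R] N) = LinearMap.range g := by
    rw [hg, LinearMap.range_comp, LinearMap.range_comp_of_range_eq_top _ e.symm.range]
  let E := Submodule.Quotient.equiv _ _ e hrange
  have hE : E.toLinearMap ∘ₗ (LinearMap.range f).mkQ
      = (LinearMap.range g).mkQ ∘ₗ (e : M →ₗ[R] N) := rfl
  (E.submoduleMap _).trans <| LinearEquiv.ofEq _ _ <| by
    rw [← Submodule.map_comp, hE, Submodule.map_comp, hker]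

lemma neg_one_pow_mul_self {R : Type*} [Monoid R] [HasDistribNeg R] (n : ℕ) :
    (-1 : R) ^ n * (-1) ^ n = 1 := by
  rw [← pow_add, ← two_mul, pow_mul, neg_one_sq, one_pow]

section Sign
variable {ι : Type} [Fintype ι] [LinearOrder ι]

lemma wsumlt_update_succ (x x' : ι) (w : ι → ℕ) :
    wsumlt ι x' (Function.update w x (w x + 1)) = wsumlt ι x' w + if x < x' then 1 else 0 := by
  unfold wsumlt
  split_ifs with h
  · have hx : x ∈ univ.filter (· < x') := by simp [h]
    rw [sum_update_of_mem hx, ← add_sum_erase _ _ hx, erase_eq]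
    ring
  · rw [sum_update_of_notMem (by simp [h]), add_zero]

def epsSign (y : Finset ι) (w : ι → ℕ) : ℤ := (-1) ^ ∑ x ∈ y, wsumlt ι x w

lemma epsSign_mul_self (y : Finset ι) (w : ι → ℕ) : epsSign y w * epsSign y w = 1 :=
  neg_one_pow_mul_self _

lemma epsSign_eq_of_mem {y : Finset ι} {x : ι} (hx : x ∈ y) (w : ι → ℕ) :
    epsSign y w = (-1) ^ wsumlt ι x w * epsSign (y.erase x) w := by
  rw [epsSign, epsSign, ← pow_add, add_sum_erase y (fun x => wsumlt ι x w) hx]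

lemma epsSign_update_succ (y : Finset ι) (x : ι) (w : ι → ℕ) :
    epsSign y (Function.update w x (w x + 1)) = epsSign y w * (-1) ^ #(y.filter (x < ·)) := by
  simp only [epsSign, wsumlt_update_succ, sum_add_distrib, sum_boole, pow_add, Nat.cast_id]

end Sign

section Eps
variable {ι : Type} [Fintype ι] [LinearOrder ι] {G : ι → Type} [∀ i, CommGroup (G i)]
  {𝒯 : Type} [CommRing 𝒯]

lemma kEps_single (t : KIdx ι G) (c : 𝒯) :
    kEps ι G 𝒯 (Finsupp.single t c) = epsSign t.1.1 t.1.2.2 • Finsupp.single t c := by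
  rw [kEps, Finsupp.lsum_single, LinearMap.toSpanSingleton_apply, smul_comm,
    Finsupp.smul_single_one]
  rfl

lemma kEps_apply (v : KIdx ι G →₀ 𝒯) (t : KIdx ι G) :
    kEps ι G 𝒯 v t = epsSign t.1.1 t.1.2.2 • v t := by
  induction v using Finsupp.induction_linear with
  | zero => simp
  | add u v hu hv => simp [hu, hv]
  | single s c =>
    classical
    rw [kEps_single, Finsupp.smul_apply, Finsupp.single_apply]
    split_ifs with h
    · rw [h]
    · rw [smul_zero, smul_zero]

lemma kEps_eq_smul_of_mem_supported {y : Finset ι} {w : ι → ℕ} {v : KIdx ι G →₀ 𝒯}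
    (hv : v ∈ Finsupp.supported 𝒯 𝒯 {t : KIdx ι G | t.1.1 = y ∧ t.1.2.2 = w}) :
    kEps ι G 𝒯 v = epsSign y w • v := by
  ext t
  rw [kEps_apply, Finsupp.smul_apply]
  by_cases ht : t.1.1 = y ∧ t.1.2.2 = w
  · rw [ht.1, ht.2]
  · rw [(Finsupp.mem_supported' 𝒯 v).1 hv t ht, smul_zero, smul_zero]

lemma kEps_comp_kEps : (kEps ι G 𝒯).comp (kEps ι G 𝒯) = LinearMap.id := by
  refine Finsupp.lhom_ext fun t c => ?_
  rw [LinearMap.comp_apply, kEps_single, map_zsmul, kEps_single, smul_smul,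
    epsSign_mul_self, one_smul, LinearMap.id_apply]

lemma kEps_involutive : Function.Involutive (kEps ι G 𝒯) :=
  LinearMap.congr_fun kEps_comp_kEps

lemma kEps_comp_kAct [∀ i, Fintype (G i)] (σ : ∀ i, G i) :
    (kEps ι G 𝒯).comp (kAct ι G 𝒯 σ) = (kAct ι G 𝒯 σ).comp (kEps ι G 𝒯) := by
  refine Finsupp.lhom_ext fun t c => ?_
  rw [LinearMap.comp_apply, LinearMap.comp_apply, kEps_single, map_zsmul, kAct]
  erw [Finsupp.lmapDomain_apply, Finsupp.mapDomain_single, kEps_single]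

end Eps

section Differentials
variable {ι : Type} [LinearOrder ι] {G : ι → Type} [∀ i, CommGroup (G i)]
  [∀ i, Fintype (G i)] {𝒯 : Type} [CommRing 𝒯]
  (p : ι → Polynomial 𝒯) (fr : ι → ∀ i, G i) (gen : ∀ i, G i)

/-- The summand `p(x; Fr_x⁻¹)[a, y/x, w] − N_{z(x)}[z(x)a, y/x, w]` of `d[a, y, w]`. -/
noncomputable def kDTerm (t : KIdx ι G) (x : t.1.1) : KIdx ι G →₀ 𝒯 :=
  (∑ k ∈ (p x.1).support,
      Finsupp.single
        (⟨(t.1.1.erase x.1, undAct ι G (fun i => (fr x.1 i)⁻¹ ^ k) t.1.2.1, t.1.2.2),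
          t.2.mono_left (erase_subset _ _)⟩ : KIdx ι G)
        ((p x.1).coeff k))
    - ∑ h : G x.1,
      Finsupp.single
        (⟨(t.1.1.erase x.1, undExt ι G x.1 h t.1.2.1, t.1.2.2), by
          show Disjoint (t.1.1.erase x.1) (insert x.1 t.1.2.1.1.1)
          rw [disjoint_insert_right]
          exact ⟨notMem_erase _ _, t.2.mono_left (erase_subset _ _)⟩⟩ : KIdx ι G)
        (1 : 𝒯)

lemma kDTerm_mem_supported (t : KIdx ι G) (x : t.1.1) :
    kDTerm p fr t x ∈
      Finsupp.supported 𝒯 𝒯 {s : KIdx ι G | s.1.1 = t.1.1.erase x ∧ s.1.2.2 = t.1.2.2} :=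
  sub_mem (sum_mem fun _ _ => Finsupp.single_mem_supported 𝒯 _ ⟨rfl, rfl⟩)
    (sum_mem fun _ _ => Finsupp.single_mem_supported 𝒯 _ ⟨rfl, rfl⟩)

lemma kD_single (t : KIdx ι G) (c : 𝒯) :
    kD ι G 𝒯 p fr (Finsupp.single t c) =
      c • ∑ x ∈ t.1.1.attach, (-1 : ℤ) ^ #(t.1.1.filter (· < x.1)) • kDTerm p fr t x := by
  rw [kD, Finsupp.lsum_single, LinearMap.toSpanSingleton_apply]
  rfl

lemma kAz_mem_supported (x : ι) (t : KIdx ι G) :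
    kAz ι G 𝒯 gen x t ∈ Finsupp.supported 𝒯 𝒯
      {s : KIdx ι G | s.1.1 = t.1.1 ∧ s.1.2.2 = Function.update t.1.2.2 x (t.1.2.2 x + 1)} := by
  unfold kAz
  split_ifs
  · exact sub_mem (Finsupp.single_mem_supported 𝒯 _ ⟨rfl, rfl⟩)
      (Finsupp.single_mem_supported 𝒯 _ ⟨rfl, rfl⟩)
  · exact sum_mem fun _ _ => Finsupp.single_mem_supported 𝒯 _ ⟨rfl, rfl⟩

variable [Fintype ι]

lemma kDT_single (t : KIdx ι G) (c : 𝒯) :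
    kDT ι G 𝒯 p fr (Finsupp.single t c) =
      c • ∑ x ∈ t.1.1.attach,
        ((-1 : ℤ) ^ #(t.1.1.filter (· < x.1)) * (-1) ^ wsumlt ι x.1 t.1.2.2) •
          kDTerm p fr t x := by
  rw [kDT, Finsupp.lsum_single, LinearMap.toSpanSingleton_apply]
  rfl

lemma kDT_comp_kEps :
    (kDT ι G 𝒯 p fr).comp (kEps ι G 𝒯) = (kEps ι G 𝒯).comp (kD ι G 𝒯 p fr) := by
  refine Finsupp.lhom_ext fun t c => ?_
  simp only [LinearMap.comp_apply, kEps_single, map_zsmul, kDT_single, kD_single, map_smul,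
    map_sum, kEps_eq_smul_of_mem_supported (kDTerm_mem_supported p fr t _), smul_sum,
    smul_smul]
  refine sum_congr rfl fun x _ => ?_
  rw [smul_comm _ c, smul_smul, epsSign_eq_of_mem x.2]
  congr 2
  linear_combination (-1 : ℤ) ^ #(t.1.1.filter (· < x.1)) * epsSign (t.1.1.erase x) t.1.2.2 *
    neg_one_pow_mul_self (R := ℤ) (wsumlt ι x.1 t.1.2.2)

lemma kDelta_single (t : KIdx ι G) (c : 𝒯) :
    kDelta ι G 𝒯 gen (Finsupp.single t c) =
      c • (-1 : ℤ) ^ #t.1.1 • ∑ x, (-1 : ℤ) ^ wsumlt ι x t.1.2.2 • kAz ι G 𝒯 gen x t := by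
  rw [kDelta, Finsupp.lsum_single, LinearMap.toSpanSingleton_apply]

lemma kDeltaT_single (t : KIdx ι G) (c : 𝒯) :
    kDeltaT ι G 𝒯 gen (Finsupp.single t c) =
      c • ∑ x, ((-1 : ℤ) ^ #(t.1.1.filter (· ≤ x)) * (-1) ^ wsumlt ι x t.1.2.2) •
        kAz ι G 𝒯 gen x t := by
  rw [kDeltaT, Finsupp.lsum_single, LinearMap.toSpanSingleton_apply]

lemma kDeltaT_comp_kEps :
    (kDeltaT ι G 𝒯 gen).comp (kEps ι G 𝒯) = (kEps ι G 𝒯).comp (kDelta ι G 𝒯 gen) := by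
  refine Finsupp.lhom_ext fun t c => ?_
  simp only [LinearMap.comp_apply, kEps_single, map_zsmul, kDeltaT_single, kDelta_single,
    map_smul, map_sum, kEps_eq_smul_of_mem_supported (kAz_mem_supported gen _ t),
    epsSign_update_succ, smul_sum, smul_smul]
  refine sum_congr rfl fun x _ => ?_
  rw [smul_comm _ c, smul_smul]
  congr 2
  set a : ℤ := (-1) ^ #(t.1.1.filter (· ≤ x))
  set b : ℤ := (-1) ^ #(t.1.1.filter (x < ·))
  have hab : (-1 : ℤ) ^ #t.1.1 = a * b := by
    rw [← pow_add, ← card_filter_add_card_filter_not (s := t.1.1) (p := (· ≤ x))]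
    simp only [not_le]
  linear_combination (-((-1) ^ wsumlt ι x t.1.2.2 * epsSign t.1.1 t.1.2.2 * b)) * hab
    - epsSign t.1.1 t.1.2.2 * a * (-1) ^ wsumlt ι x t.1.2.2 *
      neg_one_pow_mul_self (R := ℤ) #(t.1.1.filter (x < ·))

end Differentials

theorem stmt19_general (ι : Type) [Fintype ι] [LinearOrder ι]
    (G : ι → Type) [∀ i, CommGroup (G i)] [∀ i, Fintype (G i)]
    (𝒯 : Type) [CommRing 𝒯] (p : ι → Polynomial 𝒯) (fr : ι → ∀ i, G i)
    (gen : ∀ i, G i) :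
    (kEps ι G 𝒯).comp (kEps ι G 𝒯) = LinearMap.id ∧
      (kEps ι G 𝒯).comp ((kDT ι G 𝒯 p fr).comp (kEps ι G 𝒯)) = kD ι G 𝒯 p fr ∧
      (kEps ι G 𝒯).comp ((kDeltaT ι G 𝒯 gen).comp (kEps ι G 𝒯)) = kDelta ι G 𝒯 gen ∧
      (∀ σ : ∀ i, G i,
        (kEps ι G 𝒯).comp (kAct ι G 𝒯 σ) = (kAct ι G 𝒯 σ).comp (kEps ι G 𝒯)) ∧
      Nonempty
        (kCoh (kD ι G 𝒯 p fr + kDelta ι G 𝒯 gen)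
          ≃ₗ[𝒯] kCoh (kDT ι G 𝒯 p fr + kDeltaT ι G 𝒯 gen)) := by
  have hεε : (kEps ι G 𝒯).comp (kEps ι G 𝒯) = LinearMap.id := kEps_comp_kEps
  have hd := kDT_comp_kEps (G := G) p fr
  have hδ := kDeltaT_comp_kEps (𝒯 := 𝒯) gen
  have hD : (kDT ι G 𝒯 p fr + kDeltaT ι G 𝒯 gen) ∘ₗ kEps ι G 𝒯
      = kEps ι G 𝒯 ∘ₗ (kD ι G 𝒯 p fr + kDelta ι G 𝒯 gen) := by
    rw [LinearMap.add_comp, LinearMap.comp_add, hd, hδ]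
  exact ⟨hεε, LinearMap.comp_comp_eq_of_involutive hεε hd,
    LinearMap.comp_comp_eq_of_involutive hεε hδ, kEps_comp_kAct,
    ⟨LinearEquiv.kerModRangeCongr (LinearEquiv.ofInvolutive _ kEps_involutive) hD⟩⟩

/-- the map `ε[a,y,w] = (−1)^{∑_{x'<x} v_x(y)v_{x'}(w)}[a,y,w]` is an
involutive `G_z`-equivariant automorphism of `K_z` with `ε d̃ ε = d` and `ε δ̃ ε = δ`;
consequently the cohomology of `(K_z; d, δ)` is isomorphic to that of `(K_z; d̃, δ̃)`. -/
theorem stmt19 (ι : Type) [Fintype ι] [LinearOrder ι]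
    (G : ι → Type) [∀ i, CommGroup (G i)] [∀ i, Fintype (G i)] [∀ i, IsCyclic (G i)]
    (𝒯 : Type) [CommRing 𝒯] (p : ι → Polynomial 𝒯) (fr : ι → ∀ i, G i)
    (gen : ∀ i, G i) (hgen : ∀ i, ∀ g : G i, g ∈ Subgroup.zpowers (gen i)) :
    (kEps ι G 𝒯).comp (kEps ι G 𝒯) = LinearMap.id ∧
      (kEps ι G 𝒯).comp ((kDT ι G 𝒯 p fr).comp (kEps ι G 𝒯)) = kD ι G 𝒯 p fr ∧
      (kEps ι G 𝒯).comp ((kDeltaT ι G 𝒯 gen).comp (kEps ι G 𝒯)) = kDelta ι G 𝒯 gen ∧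
      (∀ σ : ∀ i, G i,
        (kEps ι G 𝒯).comp (kAct ι G 𝒯 σ) = (kAct ι G 𝒯 σ).comp (kEps ι G 𝒯)) ∧
      Nonempty
        (kCoh (kD ι G 𝒯 p fr + kDelta ι G 𝒯 gen)
          ≃ₗ[𝒯] kCoh (kDT ι G 𝒯 p fr + kDeltaT ι G 𝒯 gen)) :=
  stmt19_general ι G 𝒯 p fr gen
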